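/- With single-qubit states ρ_{y b} = U_b|y⟩⟨y|U_b†, where U_+ = I, U_× = H, U_⊙ = K, the matrix Q = 3·(½(1 + 1/√3))·I on C² satisfies Q ≥ ρ_{o₊ +} + ρ_{o_× ×} + ρ_{o_⊙ ⊙} for all o₊, o_×, o_⊙ ∈ {0,1}. -/

import Mathlib

open Matrix
open scoped ComplexOrder

/-- The Hadamard matrix. -/
noncomputable def Had : Matrix (Fin 2) (Fin 2) ℂ :=
  ((Real.sqrt 2 : ℂ))⁻¹ • !![1, 1; 1, -1]

/-- `K = (I + i σₓ)/√2`. -/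
noncomputable def Km : Matrix (Fin 2) (Fin 2) ℂ :=
  ((Real.sqrt 2 : ℂ))⁻¹ • (1 + Complex.I • !![0, 1; 1, 0])

/-- Single-qubit encodings `ρ_{y b} = U_b|y⟩⟨y|U_b†` with `U_+ = I`, `U_× = H`,
`U_⊙ = K` (`b = 0,1,2` respectively). -/
noncomputable def rhoQ (y : Fin 2) (b : Fin 3) : Matrix (Fin 2) (Fin 2) ℂ :=
  if b = 0 then Matrix.single y y 1
  else if b = 1 then Had * Matrix.single y y 1 * Hadᴴ
  else Km * Matrix.single y y 1 * Kmᴴ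

/-! Each state is `ρ_{y b} = (1 + s σ_b)/2` with `s = ±1` and `σ_b` the Pauli matrix `σ_z`, `σ_x`,
`σ_y` for `b = +, ×, ⊙`. Hence the three states sum to `3/2 + (n·σ)/2` for a Bloch vector `n` with
`|n|² = 3`, and `Q` minus this sum is `(√3 - n·σ)/2`. Since `(n·σ)² = |n|²`, the matrix
`A = √3 - n·σ` satisfies `A² = 2√3 A`, so `A = (2√3)⁻¹ AᴴA` is positive semidefinite. -/

namespace Matrix

variable {n 𝕜 : Type*} [Fintype n] [RCLike 𝕜]

theorem PosSemidef.of_isHermitian_of_mul_self_eq_smul {A : Matrix n n 𝕜} (hA : A.IsHermitian)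
    {t : ℝ} (ht : 0 < t) (h : A * A = t • A) : A.PosSemidef := by
  have hA' : A = t⁻¹ • (Aᴴ * A) := by
    rw [hA.eq, h, smul_smul, inv_mul_cancel₀ ht.ne', one_smul]
  rw [hA']
  exact (posSemidef_conjTranspose_mul_self A).smul (inv_nonneg.2 ht.le)

end Matrix

/-- `x σₓ + y σ_y + z σ_z`. -/
def blochOp (x y z : ℝ) : Matrix (Fin 2) (Fin 2) ℂ :=
  !![(z : ℂ), x - y * Complex.I; x + y * Complex.I, -z]

lemma blochOp_add (x y z x' y' z' : ℝ) :
    blochOp x y z + blochOp x' y' z' = blochOp (x + x') (y + y') (z + z') := by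
  ext i j; fin_cases i <;> fin_cases j <;> simp [blochOp] <;> ring

lemma blochOp_isHermitian (x y z : ℝ) : (blochOp x y z).IsHermitian := by
  ext i j; fin_cases i <;> fin_cases j <;> simp [blochOp, Complex.ext_iff]

lemma blochOp_mul_self (x y z : ℝ) :
    blochOp x y z * blochOp x y z = (x ^ 2 + y ^ 2 + z ^ 2) • (1 : Matrix (Fin 2) (Fin 2) ℂ) := by
  ext i j
  fin_cases i <;> fin_cases j <;> simp [blochOp, Matrix.mul_apply, Complex.ext_iff, pow_two] <;>
    ring_nf <;> simp

lemma posSemidef_smul_one_sub_blochOp {c x y z : ℝ} (hc : 0 < c)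
    (h : x ^ 2 + y ^ 2 + z ^ 2 = c ^ 2) : (c • 1 - blochOp x y z).PosSemidef := by
  refine PosSemidef.of_isHermitian_of_mul_self_eq_smul
    ((isHermitian_one.smul (.all c)).sub (blochOp_isHermitian x y z)) (mul_pos two_pos hc) ?_
  have hB := blochOp_mul_self x y z
  rw [h] at hB
  simp only [sub_mul, mul_sub, smul_mul_assoc, mul_smul_comm, one_mul, mul_one, hB]
  module

lemma inv_sqrt_two_mul_self : ((√2 : ℝ) : ℂ)⁻¹ * ((√2 : ℝ) : ℂ)⁻¹ = 2⁻¹ := by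
  rw [← mul_inv, ← Complex.ofReal_mul, Real.mul_self_sqrt zero_le_two]
  norm_num

def spinSign (y : Fin 2) : ℝ := (-1) ^ (y : ℕ)

lemma spinSign_sq (y : Fin 2) : spinSign y ^ 2 = 1 := by
  fin_cases y <;> simp [spinSign]

lemma rhoQ_zero (y : Fin 2) : rhoQ y 0 = (1 / 2 : ℝ) • (1 + blochOp 0 0 (spinSign y)) := by
  ext i j
  fin_cases y <;> fin_cases i <;> fin_cases j <;> simp [rhoQ, blochOp, spinSign] <;> norm_num

lemma rhoQ_one (y : Fin 2) : rhoQ y 1 = (1 / 2 : ℝ) • (1 + blochOp (spinSign y) 0 0) := by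
  simp only [rhoQ, Had, conjTranspose_smul, smul_mul_assoc, mul_smul_comm, smul_smul, star_inv₀,
    Complex.star_def, Complex.conj_ofReal, inv_sqrt_two_mul_self, one_ne_zero, if_false, if_true]
  ext i j
  fin_cases y <;> fin_cases i <;> fin_cases j <;>
    simp [blochOp, spinSign, Matrix.mul_apply, Fin.sum_univ_two, vecMul, dotProduct]

lemma rhoQ_two (y : Fin 2) : rhoQ y 2 = (1 / 2 : ℝ) • (1 + blochOp 0 (spinSign y) 0) := by
  simp only [rhoQ, Km, conjTranspose_smul, smul_mul_assoc, mul_smul_comm, smul_smul, star_inv₀,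
    Complex.star_def, Complex.conj_ofReal, inv_sqrt_two_mul_self]
  ext i j
  fin_cases y <;> fin_cases i <;> fin_cases j <;>
    simp [blochOp, spinSign, Matrix.mul_apply, Fin.sum_univ_two]

lemma three_mul_half_one_add_inv_sqrt_three : 3 * ((1 / 2) * (1 + (√3)⁻¹)) = 3 / 2 + √3 / 2 := by
  have h : √3 * √3 = 3 := Real.mul_self_sqrt (by norm_num)
  field_simp
  linarith

/-- Dual SDP feasibility for PI₀-STAR(XOR), three bases: the operator
`Q = 3·(½(1 + 1/√3))·I` on `ℂ²` dominates `ρ_{o₊ +} + ρ_{o_× ×} + ρ_{o_⊙ ⊙}`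
for all `o₊, o_×, o_⊙ ∈ {0,1}` in the Loewner order. -/
theorem dual_feasible_xor_three_bases :
    ∀ op ot oo : Fin 2,
      (((3 * ((1/2) * (1 + (Real.sqrt 3)⁻¹)) : ℝ) : ℂ) • (1 : Matrix (Fin 2) (Fin 2) ℂ)
        - (rhoQ op 0 + rhoQ ot 1 + rhoQ oo 2)).PosSemidef := by
  intro op ot oo
  have hsum : blochOp 0 0 (spinSign op) + blochOp (spinSign ot) 0 0 + blochOp 0 (spinSign oo) 0
      = blochOp (spinSign ot) (spinSign oo) (spinSign op) := by
    simp only [blochOp_add, add_zero, zero_add]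
  have hQ : (((3 * ((1/2) * (1 + (Real.sqrt 3)⁻¹)) : ℝ) : ℂ) • (1 : Matrix (Fin 2) (Fin 2) ℂ)
        - (rhoQ op 0 + rhoQ ot 1 + rhoQ oo 2))
      = (1 / 2 : ℝ) • (√3 • 1 - blochOp (spinSign ot) (spinSign oo) (spinSign op)) := by
    rw [rhoQ_zero, rhoQ_one, rhoQ_two, Complex.coe_smul, three_mul_half_one_add_inv_sqrt_three,
      ← hsum]
    module
  rw [hQ]
  refine (posSemidef_smul_one_sub_blochOp (by positivity) ?_).smul (by norm_num)
  rw [spinSign_sq, spinSign_sq, spinSign_sq, Real.sq_sqrt (by norm_num)]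
  norm_num
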